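/- arXiv:1201.3565 — 2 statements merged into one kernel-verified Lean document; each statement's English description precedes it below -/
import Mathlib

section
/- For every invertible real n×n matrix A, the difference between dist(Id + A, SO(n)) and the Frobenius norm of the symmetric part (A + Aᵀ)/2 is bounded by C·min(|A|, |A|²) for some constant C depending only on n, where dist is measured in Frobenius norm and |·| is the Frobenius norm. -/
/-!
Write `A = S + W` with `S = (A + Aᵀ)/2` symmetric and `W = (A - Aᵀ)/2` skew. For the upper bound
compare `1 + A` with the rotation `exp W`: `1 + A - exp W = S - (exp W - 1 - W)`, and the
remainder is `O(|A|²)`. For the lower bound, every `Q ∈ SO(n)` satisfies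
`(Q - 1) + (Q - 1)ᵀ = -(Q - 1)ᵀ(Q - 1)`, so the symmetric part of `Q - 1` is quadratically small
and `|S| ≤ |1 + A - Q| + O(|A|²)` unless `Q` is so far from `1` that `|1 + A - Q| ≥ |A|` anyway.
Both quantities also lie in `[0, |A|]`, which gives the linear bound for large `A`.
-/

open Matrix

/-- Frobenius norm of a real square matrix. -/
noncomputable def frob {n : ℕ} (A : Matrix (Fin n) (Fin n) ℝ) : ℝ :=
  Real.sqrt (∑ i, ∑ j, (A i j) ^ 2)

/-- The special orthogonal group `SO(n)` as a set of matrices. -/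
def SOset (n : ℕ) : Set (Matrix (Fin n) (Fin n) ℝ) :=
  {Q | Qᵀ * Q = 1 ∧ Q.det = 1}

/-- Frobenius distance from a matrix to `SO(n)`. -/
noncomputable def distSO {n : ℕ} (A : Matrix (Fin n) (Fin n) ℝ) : ℝ :=
  sInf ((fun Q => frob (A - Q)) '' SOset n)

open NormedSpace

open scoped Nat Matrix.Norms.Frobenius

theorem norm_exp_sub_one_sub_le {𝔸 : Type*} [NormedRing 𝔸] [NormedAlgebra ℝ 𝔸]
    [CompleteSpace 𝔸] (x : 𝔸) :
    ‖exp x - 1 - x‖ ≤ ‖x‖ ^ 2 * Real.exp ‖x‖ := by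
  have hasSum_tail : HasSum (fun k : ℕ => (((k + 2)! : ℝ)⁻¹) • x ^ (k + 2)) (exp x - 1 - x) := by
    have := (hasSum_nat_add_iff' 2).mpr (exp_series_hasSum_exp' (𝕂 := ℝ) x)
    simpa [Finset.sum_range_succ, sub_sub] using this
  have term_le (k : ℕ) :
      ‖(((k + 2)! : ℝ)⁻¹) • x ^ (k + 2)‖ ≤ ‖x‖ ^ 2 * (‖x‖ ^ k / k !) := by
    rw [norm_smul, Real.norm_of_nonneg (by positivity)]
    calc (((k + 2)! : ℝ))⁻¹ * ‖x ^ (k + 2)‖ ≤ ((k ! : ℝ))⁻¹ * ‖x‖ ^ (k + 2) := by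
          gcongr
          · omega
          · exact norm_pow_le' x (by omega)
      _ = ‖x‖ ^ 2 * (‖x‖ ^ k / k !) := by ring
  have summable_majorant : Summable (fun k : ℕ => ‖x‖ ^ 2 * (‖x‖ ^ k / k !)) :=
    (Real.summable_pow_div_factorial ‖x‖).mul_left _
  have summable_norm := summable_majorant.of_nonneg_of_le (fun k => norm_nonneg _) term_le
  calc ‖exp x - 1 - x‖ ≤ ∑' k : ℕ, ‖(((k + 2)! : ℝ)⁻¹) • x ^ (k + 2)‖ :=
        hasSum_tail.tsum_eq ▸ norm_tsum_le_tsum_norm summable_norm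
    _ ≤ ∑' k : ℕ, ‖x‖ ^ 2 * (‖x‖ ^ k / k !) := summable_norm.tsum_le_tsum term_le summable_majorant
    _ = ‖x‖ ^ 2 * Real.exp ‖x‖ := by
        rw [tsum_mul_left, Real.exp_eq_exp_ℝ, exp_eq_tsum_div]

namespace Matrix

variable {ι : Type*}

noncomputable def symPart (M : Matrix ι ι ℝ) : Matrix ι ι ℝ := ((1 : ℝ) / 2) • (M + Mᵀ)

noncomputable def skewPart (M : Matrix ι ι ℝ) : Matrix ι ι ℝ := ((1 : ℝ) / 2) • (M - Mᵀ)

theorem symPart_add_skewPart (M : Matrix ι ι ℝ) : symPart M + skewPart M = M := by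
  unfold symPart skewPart
  module

theorem symPart_sub (M N : Matrix ι ι ℝ) : symPart (M - N) = symPart M - symPart N := by
  unfold symPart
  rw [transpose_sub]
  module

theorem transpose_skewPart (M : Matrix ι ι ℝ) : (skewPart M)ᵀ = -skewPart M := by
  unfold skewPart
  rw [transpose_smul, transpose_sub, transpose_transpose]
  module

theorem norm_symPart_le [Fintype ι] (M : Matrix ι ι ℝ) : ‖symPart M‖ ≤ ‖M‖ := by
  have := norm_add_le M Mᵀ
  rw [frobenius_norm_transpose] at this
  rw [symPart, norm_smul, Real.norm_of_nonneg (by norm_num)]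
  linarith

theorem norm_skewPart_le [Fintype ι] (M : Matrix ι ι ℝ) : ‖skewPart M‖ ≤ ‖M‖ := by
  have := norm_sub_le M Mᵀ
  rw [frobenius_norm_transpose] at this
  rw [skewPart, norm_smul, Real.norm_of_nonneg (by norm_num)]
  linarith

theorem symPart_sub_one_eq_of_transpose_mul_self [Fintype ι] [DecidableEq ι] {Q : Matrix ι ι ℝ}
    (hQ : Qᵀ * Q = 1) : symPart (Q - 1) = -((1 : ℝ) / 2) • ((Q - 1)ᵀ * (Q - 1)) := by
  have expand : (Q - 1)ᵀ * (Q - 1) = Qᵀ * Q - Qᵀ - Q + 1 := by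
    simp only [transpose_sub, transpose_one, Matrix.sub_mul, Matrix.mul_sub, Matrix.one_mul,
      Matrix.mul_one]
    abel
  rw [expand, hQ, symPart, transpose_sub, transpose_one]
  module

theorem norm_symPart_sub_one_le [Fintype ι] [DecidableEq ι] {Q : Matrix ι ι ℝ} (hQ : Qᵀ * Q = 1) :
    ‖symPart (Q - 1)‖ ≤ 1 / 2 * ‖Q - 1‖ ^ 2 := by
  rw [symPart_sub_one_eq_of_transpose_mul_self hQ, norm_smul, norm_neg,
    Real.norm_of_nonneg (by norm_num)]
  gcongr
  exact (norm_mul_le _ _).trans_eq (by rw [frobenius_norm_transpose, sq])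

end Matrix

variable {n : ℕ}

theorem frob_eq_norm (A : Matrix (Fin n) (Fin n) ℝ) : frob A = ‖A‖ := by
  rw [frob, frobenius_norm_def, Real.sqrt_eq_rpow]
  simp [sq_abs]

theorem one_mem_SOset : (1 : Matrix (Fin n) (Fin n) ℝ) ∈ SOset n := by
  simp [SOset]

theorem exp_mem_SOset {W : Matrix (Fin n) (Fin n) ℝ} (hW : Wᵀ = -W) : exp W ∈ SOset n := by
  have horth : (exp W)ᵀ * exp W = 1 := by
    rw [← exp_transpose, hW, ← exp_add_of_commute (-W) W (Commute.neg_left rfl)]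
    simp
  have det_sq : det (exp W) * det (exp W) = 1 := by
    simpa using congrArg det horth
  -- `exp W` is a square, so its determinant is nonnegative
  have det_nonneg : 0 ≤ det (exp W) := by
    have : exp W = exp ((1 / 2 : ℝ) • W) * exp ((1 / 2 : ℝ) • W) := by
      rw [← exp_add_of_commute _ _ rfl, ← add_smul]
      norm_num
    rw [this, det_mul]
    exact mul_self_nonneg _
  exact ⟨horth, by nlinarith⟩

theorem distSO_le {M Q : Matrix (Fin n) (Fin n) ℝ} (hQ : Q ∈ SOset n) : distSO M ≤ ‖M - Q‖ :=
  frob_eq_norm (M - Q) ▸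
    csInf_le ⟨0, by rintro _ ⟨R, _, rfl⟩; exact Real.sqrt_nonneg _⟩ (Set.mem_image_of_mem _ hQ)

theorem le_distSO {M : Matrix (Fin n) (Fin n) ℝ} {c : ℝ} (h : ∀ Q ∈ SOset n, c ≤ ‖M - Q‖) :
    c ≤ distSO M := by
  apply le_csInf ⟨_, Set.mem_image_of_mem _ one_mem_SOset⟩
  rintro _ ⟨Q, hQ, rfl⟩
  show c ≤ frob (M - Q)
  rw [frob_eq_norm]
  exact h Q hQ

theorem distSO_nonneg (M : Matrix (Fin n) (Fin n) ℝ) : 0 ≤ distSO M :=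
  le_distSO fun _ _ => norm_nonneg _

theorem distSO_one_add_le (A : Matrix (Fin n) (Fin n) ℝ) : distSO (1 + A) ≤ ‖A‖ := by
  have := distSO_le (M := 1 + A) one_mem_SOset
  rwa [add_sub_cancel_left] at this

theorem norm_symPart_sub_le_distSO (A : Matrix (Fin n) (Fin n) ℝ) :
    ‖symPart A‖ - 2 * ‖A‖ ^ 2 ≤ distSO (1 + A) := by
  refine le_distSO fun Q hQ => ?_
  have hAE : 1 + A - Q = A - (Q - 1) := by abel
  set E := Q - 1
  have triangle : ‖symPart A‖ ≤ ‖A - E‖ + 1 / 2 * ‖E‖ ^ 2 := by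
    calc ‖symPart A‖ = ‖symPart (A - E) + symPart E‖ := by rw [symPart_sub, sub_add_cancel]
      _ ≤ ‖A - E‖ + 1 / 2 * ‖E‖ ^ 2 :=
        (norm_add_le _ _).trans (add_le_add (norm_symPart_le _) (norm_symPart_sub_one_le hQ.1))
  rw [hAE]
  rcases le_or_gt ‖E‖ (2 * ‖A‖) with hE | hE
  · nlinarith [norm_nonneg E]
  · have : ‖E‖ - ‖A‖ ≤ ‖A - E‖ := norm_sub_rev A E ▸ norm_sub_norm_le E A
    nlinarith [norm_symPart_le A]

theorem distSO_le_norm_symPart_add (A : Matrix (Fin n) (Fin n) ℝ) :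
    distSO (1 + A) ≤ ‖symPart A‖ + ‖A‖ ^ 2 * Real.exp ‖A‖ := by
  have hdecomp : 1 + A - exp (skewPart A) =
      symPart A - (exp (skewPart A) - 1 - skewPart A) := by
    nth_rw 1 [← symPart_add_skewPart A]
    abel
  calc distSO (1 + A) ≤ ‖1 + A - exp (skewPart A)‖ :=
        distSO_le (exp_mem_SOset (transpose_skewPart A))
    _ ≤ ‖symPart A‖ + ‖exp (skewPart A) - 1 - skewPart A‖ := hdecomp ▸ norm_sub_le _ _
    _ ≤ ‖symPart A‖ + ‖skewPart A‖ ^ 2 * Real.exp ‖skewPart A‖ := by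
        gcongr
        exact norm_exp_sub_one_sub_le _
    _ ≤ ‖symPart A‖ + ‖A‖ ^ 2 * Real.exp ‖A‖ := by
        gcongr <;> exact norm_skewPart_le A

theorem abs_distSO_sub_norm_symPart_le_norm (A : Matrix (Fin n) (Fin n) ℝ) :
    |distSO (1 + A) - ‖symPart A‖| ≤ ‖A‖ :=
  abs_sub_le_of_nonneg_of_le (distSO_nonneg _) (distSO_one_add_le A) (norm_nonneg _)
    (norm_symPart_le A)

theorem abs_distSO_sub_norm_symPart_le_sq (A : Matrix (Fin n) (Fin n) ℝ) :
    |distSO (1 + A) - ‖symPart A‖| ≤ (Real.exp ‖A‖ + 2) * ‖A‖ ^ 2 := by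
  have := norm_symPart_sub_le_distSO A
  have := distSO_le_norm_symPart_add A
  rw [abs_le]
  constructor <;> nlinarith [Real.exp_pos ‖A‖]

/-- for every invertible real `n×n` matrix `A`, the difference between
`dist(Id + A, SO(n))` and the Frobenius norm of the symmetric part `(A + Aᵀ)/2` is bounded
by `C·min(|A|, |A|²)`, with `C` depending only on `n`. -/
theorem stmt0 (n : ℕ) :
    ∃ C : ℝ, 0 < C ∧ ∀ A : Matrix (Fin n) (Fin n) ℝ, IsUnit A.det →
      |distSO (1 + A) - frob (((1 : ℝ) / 2) • (A + Aᵀ))| ≤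
        C * min (frob A) ((frob A) ^ 2) := by
  refine ⟨Real.exp 1 + 2, by positivity, fun A _ => ?_⟩
  change |_ - frob (symPart A)| ≤ _
  rw [frob_eq_norm, frob_eq_norm]
  rcases le_or_gt ‖A‖ 1 with hsmall | hlarge
  · rw [min_eq_right (by nlinarith [norm_nonneg A])]
    calc _ ≤ (Real.exp ‖A‖ + 2) * ‖A‖ ^ 2 := abs_distSO_sub_norm_symPart_le_sq A
      _ ≤ (Real.exp 1 + 2) * ‖A‖ ^ 2 := by gcongr
  · rw [min_eq_left (by nlinarith)]
    calc _ ≤ ‖A‖ := abs_distSO_sub_norm_symPart_le_norm A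
      _ ≤ (Real.exp 1 + 2) * ‖A‖ := le_mul_of_one_le_left (norm_nonneg A)
          (by linarith [Real.add_one_le_exp 1])
end

section
/- Let q : TM|_S → ℝⁿ be a W^{1,2}-section of orthogonal maps along a submanifold S ⊂ M (q*e = g fiberwise almost everywhere, where e is the Euclidean metric), with tangential part q^∥ = q∘ι^∥ satisfying q^∥ = dF for some F. Then the identity (∇_a q_u^α)(q⁻¹)_α^b = e_{αγ} g^{bc} (∇_c q_u^α) q^γ_a holds (in index notation, a,b,c tangential indices, u normal index, α,β,γ indices on ℝⁿ); equivalently, for tangent vectors X, Y and a normal vector ξ: ⟨(∇_X q^⊥)(ξ), q(Y)⟩ = ⟨(∇_Y q^⊥)(ξ), q(X)⟩. -/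
/-! Differentiating the orthogonality relation `⟪q^⊥ ξ, dF Y⟫ = 0` in the direction `X`
gives `⟪(∇_X q^⊥) ξ, dF Y⟫ = -⟪q^⊥ ξ, ∇²F(X, Y)⟫`; the right-hand side is symmetric in
`X, Y` because the Hessian of `F` is. -/

open scoped RealInnerProductSpace Topology

section

variable {E K G : Type*} [NormedAddCommGroup E] [NormedSpace ℝ E]
  [NormedAddCommGroup K] [NormedSpace ℝ K] [NormedAddCommGroup G] [InnerProductSpace ℝ G]

theorem inner_fderiv_left_eq_neg_of_inner_eventually_eq_zero {f g : E → G} {s : E}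
    (hf : DifferentiableAt ℝ f s) (hg : DifferentiableAt ℝ g s)
    (h : ∀ᶠ t in 𝓝 s, ⟪f t, g t⟫ = 0) (X : E) :
    ⟪fderiv ℝ f s X, g s⟫ = -⟪f s, fderiv ℝ g s X⟫ := by
  have hderiv : fderiv ℝ (fun t => ⟪f t, g t⟫) s X = 0 := by
    rw [Filter.EventuallyEq.fderiv_eq (f := fun _ => (0 : ℝ)) h, fderiv_const_apply]
    rfl
  rw [fderiv_inner_apply ℝ hf hg] at hderiv
  linarith

theorem fderiv_clm_apply_const_apply {c : E → K →L[ℝ] G} {s : E}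
    (hc : DifferentiableAt ℝ c s) (v : K) (X : E) :
    fderiv ℝ (fun t => c t v) s X = fderiv ℝ c s X v := by
  simp [fderiv_clm_apply hc (differentiableAt_const v)]

theorem inner_fderiv_apply_fderiv_eq_neg_inner_hessian {q : E → K →L[ℝ] G} {φ : E → G}
    {s : E} (hq : DifferentiableAt ℝ q s) (hφ : DifferentiableAt ℝ (fderiv ℝ φ) s)
    (horth : ∀ t ξ X, ⟪q t ξ, fderiv ℝ φ t X⟫ = 0) (ξ : K) (X Y : E) :
    ⟪fderiv ℝ q s X ξ, fderiv ℝ φ s Y⟫ = -⟪q s ξ, fderiv ℝ (fderiv ℝ φ) s X Y⟫ := by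
  have := inner_fderiv_left_eq_neg_of_inner_eventually_eq_zero
    (hq.clm_apply (differentiableAt_const ξ)) (hφ.clm_apply (differentiableAt_const Y))
    (Filter.Eventually.of_forall fun t => horth t ξ Y) X
  rwa [fderiv_clm_apply_const_apply hq, fderiv_clm_apply_const_apply hφ] at this

end

/-- (flat-chart formulation) let `q^∥ = dF` be the tangential part of an
orthogonal bundle map `q` along `S` (so that the normal part `q^⊥` is pointwise
orthogonal to the image of `dF`), with `F` twice differentiable.  Then by the symmetry
of the Hessian of `F` and orthogonality,
`⟨(∇_X q^⊥)(ξ), q(Y)⟩ = ⟨(∇_Y q^⊥)(ξ), q(X)⟩` for tangent vectors `X, Y` and a normal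
vector `ξ` — the index identity `(∇_a q_u^α)(q⁻¹)_α^b = e_{αγ} g^{bc} (∇_c q_u^α) q^γ_a`. -/
theorem stmt14 {m n k : ℕ}
    (F : EuclideanSpace ℝ (Fin m) → EuclideanSpace ℝ (Fin n)) (hF : ContDiff ℝ 2 F)
    (qperp : EuclideanSpace ℝ (Fin m) →
      (EuclideanSpace ℝ (Fin k) →L[ℝ] EuclideanSpace ℝ (Fin n)))
    (hq : Differentiable ℝ qperp)
    (horth : ∀ s ξ X, (inner ℝ (qperp s ξ) (fderiv ℝ F s X) : ℝ) = 0) :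
    ∀ s ξ X Y,
      (inner ℝ ((fderiv ℝ qperp s X) ξ) (fderiv ℝ F s Y) : ℝ) =
      (inner ℝ ((fderiv ℝ qperp s Y) ξ) (fderiv ℝ F s X) : ℝ) := by
  intro s ξ X Y
  have hdF : Differentiable ℝ (fderiv ℝ F) :=
    (hF.fderiv_right (m := 1) le_rfl).differentiable one_ne_zero
  have hsymm : fderiv ℝ (fderiv ℝ F) s X Y = fderiv ℝ (fderiv ℝ F) s Y X :=
    hF.contDiffAt.isSymmSndFDerivAt (by simp) X Y
  rw [inner_fderiv_apply_fderiv_eq_neg_inner_hessian (hq s) (hdF s) horth,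
    inner_fderiv_apply_fderiv_eq_neg_inner_hessian (hq s) (hdF s) horth, hsymm]
end
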